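/- Suppose the directed graph is strongly connected (for every pair of vertices i, j there is a directed path from i to j), let Q = DBᵀ, and let z ∈ ℝⁿ be a vector with z > 0 entrywise, 𝟙ᵀz = 1 and zᵀQ = 0. Let k > 0, ω^u ∈ ℝⁿ, and let θ̃ : ℝ → ℝⁿ be differentiable with θ̃'(t) = kQθ̃(t) + ω^u for all t ≥ 0. Then as t → ∞: (i) the frequency ω(t) := ω^u + kQθ̃(t) converges to 𝟙(zᵀω^u), i.e. all nodes converge to the common frequency zᵀω^u; equivalently, kQθ̃(t) → (𝟙zᵀ − I)ω^u; and (ii) the buffer occupancy β̃(t) := Bᵀθ̃(t) converges to a limit β^ss ∈ ℝᵐ, which satisfies kDβ^ss = (𝟙zᵀ − I)ω^u. -/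

import Mathlib

open Matrix Filter NormedSpace

attribute [local instance] Matrix.linftyOpNormedRing Matrix.linftyOpNormedAlgebra

set_option linter.unusedSectionVars false

namespace Stmt7Aux

variable {n : ℕ} [NeZero n]

noncomputable def osc (y : Fin n → ℝ) : ℝ :=
  Finset.univ.sup' Finset.univ_nonempty y - Finset.univ.inf' Finset.univ_nonempty y

lemma inf_le_sup (y : Fin n → ℝ) :
    Finset.univ.inf' Finset.univ_nonempty y ≤ Finset.univ.sup' Finset.univ_nonempty y := by
  classical
  obtain ⟨i⟩ := (inferInstance : Nonempty (Fin n))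
  exact le_trans (Finset.inf'_le _ (Finset.mem_univ i)) (Finset.le_sup' _ (Finset.mem_univ i))

lemma osc_nonneg (y : Fin n → ℝ) : 0 ≤ osc y := sub_nonneg.mpr (inf_le_sup y)

lemma abs_sub_le_osc (y : Fin n → ℝ) (i i' : Fin n) : |y i - y i'| ≤ osc y := by
  rw [abs_sub_le_iff]
  constructor <;>
  · refine sub_le_sub ?_ ?_
    · exact Finset.le_sup' _ (Finset.mem_univ _)
    · exact Finset.inf'_le _ (Finset.mem_univ _)

lemma mulVec_upper {M : Matrix (Fin n) (Fin n) ℝ} {ε : ℝ} (hε0 : 0 ≤ ε)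
    (hM : ∀ i j, ε ≤ M i j) (hrow : ∀ i, ∑ j, M i j = 1) (y : Fin n → ℝ) (i : Fin n) :
    M.mulVec y i ≤ Finset.univ.sup' Finset.univ_nonempty y - ε * osc y := by
  classical
  obtain ⟨i0, -, h0⟩ := Finset.exists_mem_eq_inf' (Finset.univ_nonempty) y
  have hnn : ∀ j, (0:ℝ) ≤ M i j := fun j => le_trans hε0 (hM i j)
  have hmv : M.mulVec y i = ∑ l, M i l * y l := by
    simp [Matrix.mulVec, dotProduct]
  set Su := Finset.univ.sup' (Finset.univ_nonempty) y with hSu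
  set In := Finset.univ.inf' (Finset.univ_nonempty) y with hIn
  have hsplit : ∑ l, M i l * y l
      = M i i0 * y i0 + ∑ l ∈ Finset.univ.erase i0, M i l * y l := by
    rw [← Finset.add_sum_erase _ _ (Finset.mem_univ i0)]
  have hbound : ∑ l ∈ Finset.univ.erase i0, M i l * y l
      ≤ ∑ l ∈ Finset.univ.erase i0, M i l * Su := by
    refine Finset.sum_le_sum fun l _ => ?_
    exact mul_le_mul_of_nonneg_left (Finset.le_sup' _ (Finset.mem_univ l)) (hnn l)
  have herase : ∑ l ∈ Finset.univ.erase i0, M i l = 1 - M i i0 := by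
    rw [Finset.sum_erase_eq_sub (Finset.mem_univ i0), hrow i]
  have : M.mulVec y i ≤ M i i0 * y i0 + (1 - M i i0) * Su := by
    rw [hmv, hsplit]
    have := hbound
    rw [← Finset.sum_mul, herase] at this
    linarith
  have hyi0 : y i0 = In := h0.symm
  have hosz : osc y = Su - In := rfl
  have hMii0 : ε ≤ M i i0 := hM i i0
  nlinarith [inf_le_sup y, hM i i0]

lemma mulVec_lower {M : Matrix (Fin n) (Fin n) ℝ} {ε : ℝ} (hε0 : 0 ≤ ε)
    (hM : ∀ i j, ε ≤ M i j) (hrow : ∀ i, ∑ j, M i j = 1) (y : Fin n → ℝ) (i : Fin n) :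
    Finset.univ.inf' Finset.univ_nonempty y + ε * osc y ≤ M.mulVec y i := by
  classical
  obtain ⟨i1, -, h1⟩ := Finset.exists_mem_eq_sup' (Finset.univ_nonempty) y
  have hnn : ∀ j, (0:ℝ) ≤ M i j := fun j => le_trans hε0 (hM i j)
  have hmv : M.mulVec y i = ∑ l, M i l * y l := by
    simp [Matrix.mulVec, dotProduct]
  set Su := Finset.univ.sup' (Finset.univ_nonempty) y with hSu
  set In := Finset.univ.inf' (Finset.univ_nonempty) y with hIn
  have hsplit : ∑ l, M i l * y l
      = M i i1 * y i1 + ∑ l ∈ Finset.univ.erase i1, M i l * y l := by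
    rw [← Finset.add_sum_erase _ _ (Finset.mem_univ i1)]
  have hbound : ∑ l ∈ Finset.univ.erase i1, M i l * In
      ≤ ∑ l ∈ Finset.univ.erase i1, M i l * y l := by
    refine Finset.sum_le_sum fun l _ => ?_
    exact mul_le_mul_of_nonneg_left (Finset.inf'_le _ (Finset.mem_univ l)) (hnn l)
  have herase : ∑ l ∈ Finset.univ.erase i1, M i l = 1 - M i i1 := by
    rw [Finset.sum_erase_eq_sub (Finset.mem_univ i1), hrow i]
  have hge : M i i1 * y i1 + (1 - M i i1) * In ≤ M.mulVec y i := by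
    rw [hmv, hsplit]
    have := hbound
    rw [← Finset.sum_mul, herase] at this
    linarith
  have hyi1 : y i1 = Su := h1.symm
  have hosz : osc y = Su - In := rfl
  nlinarith [inf_le_sup y, hM i i1]

lemma osc_contract {M : Matrix (Fin n) (Fin n) ℝ} {ε : ℝ} (hε0 : 0 ≤ ε)
    (hM : ∀ i j, ε ≤ M i j) (hrow : ∀ i, ∑ j, M i j = 1) (y : Fin n → ℝ) :
    osc (M.mulVec y) ≤ (1 - 2*ε) * osc y := by
  have h1 : Finset.univ.sup' Finset.univ_nonempty (M.mulVec y)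
      ≤ Finset.univ.sup' Finset.univ_nonempty y - ε * osc y :=
    Finset.sup'_le _ _ fun i _ => mulVec_upper hε0 hM hrow y i
  have h2 : Finset.univ.inf' Finset.univ_nonempty y + ε * osc y
      ≤ Finset.univ.inf' Finset.univ_nonempty (M.mulVec y) :=
    Finset.le_inf' _ _ fun i _ => mulVec_lower hε0 hM hrow y i
  have : osc (M.mulVec y) = Finset.univ.sup' Finset.univ_nonempty (M.mulVec y)
      - Finset.univ.inf' Finset.univ_nonempty (M.mulVec y) := rfl
  have hoy : osc y = Finset.univ.sup' Finset.univ_nonempty y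
      - Finset.univ.inf' Finset.univ_nonempty y := rfl
  linarith

lemma pow_entry_nonneg {P : Matrix (Fin n) (Fin n) ℝ} (hP0 : ∀ i j, 0 ≤ P i j) (L : ℕ) :
    ∀ i j, 0 ≤ (P ^ L) i j := by
  induction L with
  | zero => intro i j; by_cases h : i = j <;> simp [Matrix.one_apply, h]
  | succ L ih =>
    intro i j
    rw [pow_succ, Matrix.mul_apply]
    exact Finset.sum_nonneg fun l _ => mul_nonneg (ih i l) (hP0 l j)

lemma pow_row_sum {P : Matrix (Fin n) (Fin n) ℝ} (hrow : ∀ i, ∑ j, P i j = 1) (L : ℕ) :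
    ∀ i, ∑ j, (P ^ L) i j = 1 := by
  induction L with
  | zero => intro i; simp [Matrix.one_apply]
  | succ L ih =>
    intro i
    simp only [pow_succ, Matrix.mul_apply]
    rw [Finset.sum_comm]
    calc ∑ l, ∑ j, (P ^ L) i l * P l j = ∑ l, (P ^ L) i l * ∑ j, P l j := by
          simp [Finset.mul_sum]
      _ = 1 := by simp [hrow, ih i]

lemma osc_pow_le {P : Matrix (Fin n) (Fin n) ℝ} (hP0 : ∀ i j, 0 ≤ P i j)
    (hrow : ∀ i, ∑ j, P i j = 1) (L : ℕ) :
    ∀ y : Fin n → ℝ, osc ((P ^ L).mulVec y) ≤ osc y := by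
  induction L with
  | zero => intro y; simp [Matrix.one_mulVec]
  | succ L ih =>
    intro y
    have heq : (P ^ (L+1)).mulVec y = (P ^ L).mulVec (P.mulVec y) := by
      rw [pow_succ, ← Matrix.mulVec_mulVec]
    rw [heq]
    refine le_trans (ih (P.mulVec y)) ?_
    have := osc_contract (le_refl (0:ℝ)) (fun i j => hP0 i j) hrow y
    simpa using this

lemma osc_powN {M : Matrix (Fin n) (Fin n) ℝ} {ε : ℝ} (hε0 : 0 ≤ ε) (hε1 : 2*ε ≤ 1)
    (hM : ∀ i j, ε ≤ M i j) (hrow : ∀ i, ∑ j, M i j = 1) (q : ℕ) :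
    ∀ y : Fin n → ℝ, osc ((M ^ q).mulVec y) ≤ (1 - 2*ε) ^ q * osc y := by
  induction q with
  | zero => intro y; simp [Matrix.one_mulVec]
  | succ q ih =>
    intro y
    have heq : (M ^ (q+1)).mulVec y = (M ^ q).mulVec (M.mulVec y) := by
      rw [pow_succ, ← Matrix.mulVec_mulVec]
    rw [heq]
    refine le_trans (ih (M.mulVec y)) ?_
    have h1 := osc_contract hε0 hM hrow y
    have h2 : (0:ℝ) ≤ (1 - 2*ε) ^ q := pow_nonneg (by linarith) q
    calc (1 - 2*ε) ^ q * osc (M.mulVec y) ≤ (1 - 2*ε) ^ q * ((1 - 2*ε) * osc y) :=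
          mul_le_mul_of_nonneg_left h1 h2
      _ = (1 - 2*ε) ^ (q+1) * osc y := by ring

lemma osc_pow_decay {P : Matrix (Fin n) (Fin n) ℝ} (hP0 : ∀ i j, 0 ≤ P i j)
    (hrow : ∀ i, ∑ j, P i j = 1) {N : ℕ} (hN : 0 < N) {ε : ℝ} (hε0 : 0 ≤ ε) (hε1 : 2*ε ≤ 1)
    (hPN : ∀ i j, ε ≤ (P ^ N) i j) (j : ℕ) (y : Fin n → ℝ) :
    osc ((P ^ j).mulVec y) ≤ (1 - 2*ε) ^ (j / N) * osc y := by
  have hdm : N * (j / N) + j % N = j := Nat.div_add_mod j N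
  have hsplit : P ^ j = (P ^ N) ^ (j / N) * P ^ (j % N) := by
    rw [← pow_mul, ← pow_add, hdm]
  rw [hsplit, ← Matrix.mulVec_mulVec]
  refine le_trans (osc_powN hε0 hε1 hPN (pow_row_sum hrow N) (j / N) _) ?_
  have h2 : (0:ℝ) ≤ (1 - 2*ε) ^ (j / N) := pow_nonneg (by linarith) _
  exact mul_le_mul_of_nonneg_left (osc_pow_le hP0 hrow (j % N) y) h2


/-- evaluation of `M.mulVec x` at `i`, as a continuous linear map in `M`. -/
noncomputable def evCLM (x : Fin n → ℝ) (i : Fin n) :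
    Matrix (Fin n) (Fin n) ℝ →L[ℝ] ℝ :=
  LinearMap.toContinuousLinearMap
    { toFun := fun M => M.mulVec x i
      map_add' := fun M N => by simp [Matrix.add_mulVec]
      map_smul' := fun c M => by simp [Matrix.smul_mulVec] }

@[simp] lemma evCLM_apply (x : Fin n → ℝ) (i : Fin n) (M : Matrix (Fin n) (Fin n) ℝ) :
    evCLM x i M = M.mulVec x i := rfl

lemma exp_smul_eval (R : Matrix (Fin n) (Fin n) ℝ) (s : ℝ) (x : Fin n → ℝ) (i : Fin n) :
    (exp (s • R)).mulVec x i = ∑' j : ℕ, ((Nat.factorial j : ℝ))⁻¹ * s ^ j * ((R ^ j).mulVec x i) := by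
  have hsum : Summable fun j : ℕ => ((Nat.factorial j : ℝ))⁻¹ • (s • R) ^ j := expSeries_summable' (𝕂 := ℝ) _
  have h1 : (exp (s • R)).mulVec x i = evCLM x i (∑' j : ℕ, ((Nat.factorial j : ℝ))⁻¹ • (s • R) ^ j) := by
    rw [exp_eq_tsum (𝕂 := ℝ)]; rfl
  rw [h1, ContinuousLinearMap.map_tsum _ hsum]
  congr 1
  funext j
  rw [smul_pow]
  simp [Matrix.smul_mulVec, smul_smul, mul_assoc]

lemma summable_eval (R : Matrix (Fin n) (Fin n) ℝ) (s : ℝ) (x : Fin n → ℝ) (i : Fin n) :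
    Summable fun j : ℕ => ((Nat.factorial j : ℝ))⁻¹ * s ^ j * ((R ^ j).mulVec x i) := by
  have hsum : Summable fun j : ℕ => ((Nat.factorial j : ℝ))⁻¹ • (s • R) ^ j := expSeries_summable' (𝕂 := ℝ) _
  have := hsum.map (evCLM x i).toLinearMap.toAddMonoidHom (evCLM x i).continuous
  refine this.congr fun j => ?_
  simp only [Function.comp, LinearMap.toAddMonoidHom_coe, ContinuousLinearMap.coe_coe]
  rw [smul_pow]
  simp [Matrix.smul_mulVec, smul_smul, mul_assoc]

lemma exp_smul_sub_one (R : Matrix (Fin n) (Fin n) ℝ) (a t : ℝ) :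
    exp (t • (a • (R - 1))) = Real.exp (-(t * a)) • exp ((t * a) • R) := by
  have h1 : t • (a • (R - 1)) = (t * a) • R + (-(t * a)) • (1 : Matrix (Fin n) (Fin n) ℝ) := by
    rw [smul_smul, smul_sub]; module
  have hcomm : Commute ((t * a) • R) ((-(t * a)) • (1 : Matrix (Fin n) (Fin n) ℝ)) :=
    ((Commute.one_right _).smul_right _).smul_left _
  rw [h1, Matrix.exp_add_of_commute _ _ hcomm]
  have h2 : (-(t * a)) • (1 : Matrix (Fin n) (Fin n) ℝ)
      = algebraMap ℝ (Matrix (Fin n) (Fin n) ℝ) (-(t * a)) := by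
    rw [Algebra.algebraMap_eq_smul_one]
  have hh : exp (algebraMap ℝ (Matrix (Fin n) (Fin n) ℝ) (-(t * a)))
      = algebraMap ℝ (Matrix (Fin n) (Fin n) ℝ) (Real.exp (-(t * a))) := by
    rw [Real.exp_eq_exp_ℝ]; exact (algebraMap_exp_comm _).symm
  rw [h2, hh, Algebra.algebraMap_eq_smul_one,
    mul_smul_comm, mul_one]


lemma rpow_floor_bound {ρ : ℝ} (hρ0 : 0 < ρ) (hρ1 : ρ < 1) {N : ℕ} (hN : 0 < N) (j : ℕ) :
    ρ ^ (j / N) ≤ ρ⁻¹ * (ρ ^ ((N : ℝ)⁻¹)) ^ j := by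
  have hσ : (ρ ^ ((N : ℝ)⁻¹)) ^ j = ρ ^ ((j : ℝ) / (N : ℝ)) := by
    rw [← Real.rpow_natCast (ρ ^ ((N : ℝ)⁻¹)) j, ← Real.rpow_mul hρ0.le]
    ring_nf
  have hkey : ρ ^ ((j / N : ℕ) + 1 : ℕ) ≤ ρ ^ ((j : ℝ) / (N : ℝ)) := by
    have hle : (j : ℝ) / (N : ℝ) ≤ ((j / N : ℕ) + 1 : ℕ) := by
      rw [div_le_iff₀ (by exact_mod_cast hN)]
      have h1 : j < (j / N + 1) * N := by
        have h2 := Nat.div_add_mod j N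
        have h3 := Nat.mod_lt j hN
        calc j = N * (j / N) + j % N := h2.symm
          _ < N * (j / N) + N := Nat.add_lt_add_left h3 _
          _ = (j / N + 1) * N := by ring
      exact_mod_cast h1.le
    calc ρ ^ ((j / N : ℕ) + 1 : ℕ) = ρ ^ (((j / N : ℕ) + 1 : ℕ) : ℝ) := by
          rw [Real.rpow_natCast]
      _ ≤ ρ ^ ((j : ℝ) / (N : ℝ)) := Real.rpow_le_rpow_of_exponent_ge hρ0 hρ1.le hle
  rw [hσ]
  calc ρ ^ (j / N) = ρ⁻¹ * ρ ^ ((j / N) + 1) := by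
        rw [pow_succ]; field_simp
    _ ≤ ρ⁻¹ * ρ ^ ((j : ℝ) / (N : ℝ)) := by
        exact mul_le_mul_of_nonneg_left hkey (by positivity)

lemma exp_pair_decay (P : Matrix (Fin n) (Fin n) ℝ)
    (hP0 : ∀ i j, 0 ≤ P i j) (hProw : ∀ i, ∑ j, P i j = 1)
    {N : ℕ} (hN : 0 < N) {ε : ℝ} (hε0 : 0 < ε) (hε1 : ε ≤ 1/4)
    (hPN : ∀ i j, ε ≤ (P ^ N) i j) {a : ℝ} (ha : 0 < a) (x : Fin n → ℝ) :
    ∃ C lam : ℝ, 0 ≤ C ∧ 0 < lam ∧ ∀ t : ℝ, 0 ≤ t → ∀ i i' : Fin n,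
      |(exp (t • (a • (P - 1)))).mulVec x i - (exp (t • (a • (P - 1)))).mulVec x i'|
        ≤ C * Real.exp (-(lam * t)) := by
  set ρ : ℝ := 1 - 2*ε with hρ
  have hρ0 : 0 < ρ := by rw [hρ]; linarith
  have hρ1 : ρ < 1 := by rw [hρ]; linarith
  set σ : ℝ := ρ ^ ((N : ℝ)⁻¹) with hσdef
  have hσ0 : 0 < σ := Real.rpow_pos_of_pos hρ0 _
  have hσ1 : σ < 1 := Real.rpow_lt_one hρ0.le hρ1 (by positivity)
  refine ⟨ρ⁻¹ * osc x, a * (1 - σ), mul_nonneg (inv_nonneg.mpr hρ0.le) (osc_nonneg x),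
    by nlinarith, ?_⟩
  intro t ht i i'
  set s : ℝ := t * a with hs
  have hs0 : 0 ≤ s := mul_nonneg ht ha.le
  rw [exp_smul_sub_one]
  have hcoord : ∀ i0 : Fin n, ((Real.exp (-(t*a)) • exp ((t*a) • P)).mulVec x) i0
      = Real.exp (-s) * ((exp (s • P)).mulVec x) i0 := by
    intro i0
    rw [Matrix.smul_mulVec]
    simp [hs]
  rw [hcoord i, hcoord i', ← mul_sub, abs_mul, Real.abs_exp]
  rw [exp_smul_eval, exp_smul_eval]
  set v : ℕ → ℝ := fun j => ((Nat.factorial j : ℝ))⁻¹ * s ^ j * ((P ^ j).mulVec x i)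
  set w : ℕ → ℝ := fun j => ((Nat.factorial j : ℝ))⁻¹ * s ^ j * ((P ^ j).mulVec x i')
  have hv : Summable v := summable_eval P s x i
  have hw : Summable w := summable_eval P s x i'
  rw [← Summable.tsum_sub hv hw]
  -- dominating series
  set g : ℕ → ℝ := fun j => ((Nat.factorial j : ℝ))⁻¹ * s ^ j * (ρ⁻¹ * σ ^ j * osc x)
  have hg : Summable g := by
    have hgeom : Summable (fun j : ℕ => ((Nat.factorial j : ℝ))⁻¹ * (s * σ) ^ j) := by
      have := Real.summable_pow_div_factorial (s * σ)
      refine this.congr fun j => ?_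
      rw [div_eq_mul_inv, mul_comm]
    have := hgeom.mul_right (ρ⁻¹ * osc x)
    refine this.congr fun j => ?_
    simp only [g]
    ring
  have hbound : ∀ j : ℕ, |v j - w j| ≤ g j := by
    intro j
    have h1 : v j - w j = ((Nat.factorial j : ℝ))⁻¹ * s ^ j
        * (((P ^ j).mulVec x i) - ((P ^ j).mulVec x i')) := by simp only [v, w]; ring
    rw [h1, abs_mul]
    have hwnn : (0:ℝ) ≤ ((Nat.factorial j : ℝ))⁻¹ * s ^ j := by positivity
    rw [abs_of_nonneg hwnn]
    have h2 : |((P ^ j).mulVec x i) - ((P ^ j).mulVec x i')| ≤ ρ ^ (j / N) * osc x := by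
      refine le_trans (abs_sub_le_osc _ i i') ?_
      have := osc_pow_decay hP0 hProw hN hε0.le (by linarith) hPN j x
      simpa [hρ] using this
    have h3 : ρ ^ (j / N) * osc x ≤ ρ⁻¹ * σ ^ j * osc x := by
      have := rpow_floor_bound hρ0 hρ1 hN j
      exact mul_le_mul_of_nonneg_right (by simpa [hσdef] using this) (osc_nonneg x)
    calc ((Nat.factorial j : ℝ))⁻¹ * s ^ j * |((P ^ j).mulVec x i) - ((P ^ j).mulVec x i')|
        ≤ ((Nat.factorial j : ℝ))⁻¹ * s ^ j * (ρ⁻¹ * σ ^ j * osc x) :=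
          mul_le_mul_of_nonneg_left (le_trans h2 h3) hwnn
      _ = g j := rfl
  have hvw : Summable (fun j => v j - w j) := hv.sub hw
  have habs1 : |∑' j, (v j - w j)| ≤ ∑' j, |v j - w j| := by
    simpa using norm_tsum_le_tsum_norm (f := fun j => v j - w j) hvw.abs
  have habs2 : (∑' j, |v j - w j|) ≤ ∑' j, g j := Summable.tsum_le_tsum hbound hvw.abs hg
  have hgsum : (∑' j, g j) = ρ⁻¹ * osc x * Real.exp (s * σ) := by
    have hexp : Real.exp (s * σ) = ∑' j : ℕ, ((Nat.factorial j : ℝ))⁻¹ * (s * σ) ^ j := by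
      rw [Real.exp_eq_exp_ℝ]
      rw [exp_eq_tsum (𝕂 := ℝ)]
      simp [smul_eq_mul]
    rw [hexp, ← tsum_mul_left]
    congr 1
    funext j
    simp only [g]
    ring
  have hfinal : |∑' j, (v j - w j)| ≤ ρ⁻¹ * osc x * Real.exp (s * σ) := by
    rw [← hgsum]; exact le_trans habs1 habs2
  calc Real.exp (-s) * |∑' j, (v j - w j)|
      ≤ Real.exp (-s) * (ρ⁻¹ * osc x * Real.exp (s * σ)) :=
        mul_le_mul_of_nonneg_left hfinal (Real.exp_nonneg _)
    _ = ρ⁻¹ * osc x * Real.exp (-(a * (1 - σ) * t)) := by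
        rw [mul_comm (Real.exp (-s)), mul_assoc, ← Real.exp_add]
        congr 2
        rw [hs]; ring


lemma pow_pos_step {P : Matrix (Fin n) (Fin n) ℝ} (hP0 : ∀ i j, 0 ≤ P i j)
    (hdiag : ∀ i, 0 < P i i) {L : ℕ} {i j : Fin n} (h : 0 < (P ^ L) i j) :
    0 < (P ^ (L + 1)) i j := by
  rw [pow_succ, Matrix.mul_apply]
  have hle : (P ^ L) i j * P j j ≤ ∑ l, (P ^ L) i l * P l j :=
    Finset.single_le_sum (f := fun l => (P ^ L) i l * P l j)
      (fun l _ => mul_nonneg (pow_entry_nonneg hP0 L i l) (hP0 l j)) (Finset.mem_univ j)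
  exact lt_of_lt_of_le (mul_pos h (hdiag j)) hle

lemma pow_pos_mono {P : Matrix (Fin n) (Fin n) ℝ} (hP0 : ∀ i j, 0 ≤ P i j)
    (hdiag : ∀ i, 0 < P i i) {L L' : ℕ} (hLL : L ≤ L') {i j : Fin n}
    (h : 0 < (P ^ L) i j) : 0 < (P ^ L') i j := by
  induction L', hLL using Nat.le_induction with
  | base => exact h
  | succ L' hL ih => exact pow_pos_step hP0 hdiag ih

/-- `M.mulVec x`, as a continuous linear map in `M`. -/
noncomputable def mvCLM (x : Fin n → ℝ) :
    Matrix (Fin n) (Fin n) ℝ →L[ℝ] (Fin n → ℝ) :=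
  LinearMap.toContinuousLinearMap
    { toFun := fun M => M.mulVec x
      map_add' := fun M N => by simp [Matrix.add_mulVec]
      map_smul' := fun c M => by simp [Matrix.smul_mulVec] }

@[simp] lemma mvCLM_apply (x : Fin n → ℝ) (M : Matrix (Fin n) (Fin n) ℝ) :
    mvCLM x M = M.mulVec x := rfl

/-- `A.mulVec`, as a continuous linear map. -/
noncomputable def vmCLM {p q : ℕ} (A : Matrix (Fin p) (Fin q) ℝ) :
    (Fin q → ℝ) →L[ℝ] (Fin p → ℝ) :=
  LinearMap.toContinuousLinearMap A.mulVecLin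

@[simp] lemma vmCLM_apply {p q : ℕ} (A : Matrix (Fin p) (Fin q) ℝ) (x : Fin q → ℝ) :
    vmCLM A x = A.mulVec x := rfl

lemma hasDerivAt_exp_mulVec (A : Matrix (Fin n) (Fin n) ℝ) (x : Fin n → ℝ) (t : ℝ) :
    HasDerivAt (fun u : ℝ => (exp (u • A)).mulVec x)
      (A.mulVec ((exp (t • A)).mulVec x)) t := by
  have h1 := hasDerivAt_exp_smul_const' (𝕂 := ℝ) A t
  have h2 := ((mvCLM x).hasFDerivAt.comp_hasDerivAt t h1)
  have h3 : mvCLM x (A * exp (t • A)) = A.mulVec ((exp (t • A)).mulVec x) := by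
    simp [Matrix.mulVec_mulVec]
  exact h2.congr_deriv h3

lemma ode_eq_exp {A : Matrix (Fin n) (Fin n) ℝ} {f : ℝ → Fin n → ℝ}
    (hf : ∀ t : ℝ, 0 ≤ t → HasDerivAt f (A.mulVec (f t)) t) :
    ∀ t : ℝ, 0 ≤ t → f t = (exp (t • A)).mulVec (f 0) := by
  intro t ht
  set g : ℝ → Fin n → ℝ := fun u => (exp (u • A)).mulVec (f 0) with hg
  have hK : ∀ u : ℝ, LipschitzWith ‖vmCLM A‖₊ (fun x : Fin n → ℝ => vmCLM A x) :=
    fun _ => (vmCLM A).lipschitz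
  have heq : Set.EqOn f g (Set.Icc 0 t) := by
    refine ODE_solution_unique (v := fun _ x => vmCLM A x) hK ?_ ?_ ?_ ?_ ?_
    · intro u hu
      exact ((hf u hu.1).continuousAt).continuousWithinAt
    · intro u hu
      exact (hf u hu.1).hasDerivWithinAt
    · intro u hu
      exact ((hasDerivAt_exp_mulVec A (f 0) u).continuousAt).continuousWithinAt
    · intro u hu
      exact (hasDerivAt_exp_mulVec A (f 0) u).hasDerivWithinAt
    · simp [hg, Matrix.one_mulVec]
  exact heq ⟨ht, le_rfl⟩

end Stmt7Aux


open Stmt7Aux MeasureTheory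

/-- with proportional control on a strongly connected graph,
frequencies converge to the common frequency zᵀω^u and buffer occupancies
converge to a steady state β^ss with kДβ^ss = (𝟙zᵀ − I)ω^u. -/
theorem stmt7 {n m : ℕ}
    (src dst : Fin m → Fin n) (hloop : ∀ e, src e ≠ dst e)
    (S D B : Matrix (Fin n) (Fin m) ℝ)
    (hS : S = Matrix.of fun i e => if src e = i then (1 : ℝ) else 0)
    (hD : D = Matrix.of fun i e => if dst e = i then (1 : ℝ) else 0)
    (hB : B = S - D)
    (hconn : ∀ i j : Fin n,
      Relation.ReflTransGen (fun a b : Fin n => ∃ e, src e = a ∧ dst e = b) i j)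
    (Q : Matrix (Fin n) (Fin n) ℝ) (hQ : Q = D * Bᵀ)
    (z : Fin n → ℝ) (hz : ∀ i, 0 < z i) (hz1 : (∑ i, z i) = 1)
    (hzQ : Q.vecMul z = 0)
    (k : ℝ) (hk : 0 < k) (ωu : Fin n → ℝ)
    (θt : ℝ → Fin n → ℝ)
    (hθt : ∀ t : ℝ, 0 ≤ t → HasDerivAt θt (k • Q.mulVec (θt t) + ωu) t) :
    Tendsto (fun t : ℝ => ωu + k • Q.mulVec (θt t)) atTop
      (nhds (fun _ : Fin n => ∑ i, z i * ωu i)) ∧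
    Tendsto (fun t : ℝ => k • Q.mulVec (θt t)) atTop
      (nhds ((vecMulVec (fun _ => (1 : ℝ)) z - 1).mulVec ωu)) ∧
    ∃ βss : Fin m → ℝ,
      Tendsto (fun t : ℝ => Bᵀ.mulVec (θt t)) atTop (nhds βss) ∧
      k • D.mulVec βss = (vecMulVec (fun _ => (1 : ℝ)) z - 1).mulVec ωu := by
  classical
  have hn : n ≠ 0 := by
    rintro rfl
    simp at hz1
  haveI : NeZero n := ⟨hn⟩
  -- entrywise facts about Q
  have hQapp : ∀ i j, Q i j = ∑ e, (if dst e = i then (1:ℝ) else 0) *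
      ((if src e = j then (1:ℝ) else 0) - (if dst e = j then (1:ℝ) else 0)) := by
    intro i j
    rw [hQ, Matrix.mul_apply]
    refine Finset.sum_congr rfl fun e _ => ?_
    rw [hD, hB, hS, hD]
    simp [Matrix.transpose_apply, Matrix.sub_apply]
  have hQrow : ∀ i, ∑ j, Q i j = 0 := by
    intro i
    simp only [hQapp]
    rw [Finset.sum_comm]
    refine Finset.sum_eq_zero fun e _ => ?_
    rw [← Finset.mul_sum, Finset.sum_sub_distrib]
    simp [Finset.sum_ite_eq]
  have hQoff : ∀ i j, i ≠ j → 0 ≤ Q i j := by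
    intro i j hij
    rw [hQapp]
    refine Finset.sum_nonneg fun e _ => ?_
    by_cases h1 : dst e = i
    · have h2 : dst e ≠ j := fun hh => hij (h1 ▸ hh ▸ rfl)
      by_cases h3 : src e = j <;> simp [h1, h2, h3, hij]
    · simp [h1]
  have hQdiag : ∀ i, -(m:ℝ) ≤ Q i i := by
    intro i
    rw [hQapp]
    have : ∀ e : Fin m, (-1:ℝ) ≤ (if dst e = i then (1:ℝ) else 0) *
        ((if src e = i then (1:ℝ) else 0) - (if dst e = i then (1:ℝ) else 0)) := by
      intro e
      by_cases h1 : dst e = i <;> by_cases h2 : src e = i <;> simp [h1, h2] <;> norm_num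
    calc -(m:ℝ) = ∑ _e : Fin m, (-1:ℝ) := by simp
      _ ≤ _ := Finset.sum_le_sum fun e _ => this e
  have hQedge : ∀ e : Fin m, (1:ℝ) ≤ Q (dst e) (src e) := by
    intro e
    rw [hQapp]
    have hterm : ∀ e' : Fin m, (0:ℝ) ≤ (if dst e' = dst e then (1:ℝ) else 0) *
        ((if src e' = src e then (1:ℝ) else 0) - (if dst e' = src e then (1:ℝ) else 0)) := by
      intro e'
      by_cases h1 : dst e' = dst e
      · have h2 : dst e' ≠ src e := fun hh => (hloop e) (by rw [← hh, h1])
        have hne : dst e ≠ src e := fun hh => (hloop e) hh.symm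
        by_cases h3 : src e' = src e <;> simp [h1, h2, h3, hne]
      · simp [h1]
    have hsingle : (1:ℝ) = (if dst e = dst e then (1:ℝ) else 0) *
        ((if src e = src e then (1:ℝ) else 0) - (if dst e = src e then (1:ℝ) else 0)) := by
      have : dst e ≠ src e := fun hh => (hloop e) hh.symm
      simp [this]
    refine le_trans (le_of_eq hsingle) ?_
    exact Finset.single_le_sum (fun e' _ => hterm e') (Finset.mem_univ e)
  -- stochastic matrix P
  set c0 : ℝ := ((m:ℝ)+1)⁻¹ with hc0
  have hc0pos : 0 < c0 := by positivity
  set P : Matrix (Fin n) (Fin n) ℝ := 1 + c0 • Q with hPdef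
  have hPapp : ∀ i j, P i j = (if i = j then (1:ℝ) else 0) + c0 * Q i j := by
    intro i j
    simp [hPdef, Matrix.add_apply, Matrix.one_apply, Matrix.smul_apply, smul_eq_mul]
  have hProw : ∀ i, ∑ j, P i j = 1 := by
    intro i
    simp only [hPapp]
    rw [Finset.sum_add_distrib, ← Finset.mul_sum, hQrow]
    simp
  have hPdiagpos : ∀ i, 0 < P i i := by
    intro i
    rw [hPapp]
    have h1 : c0 * (-(m:ℝ)) ≤ c0 * Q i i := mul_le_mul_of_nonneg_left (hQdiag i) hc0pos.le
    have h2 : c0 * (m:ℝ) < 1 := by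
      rw [hc0, inv_mul_eq_div, div_lt_one (by positivity)]
      linarith
    rw [mul_neg] at h1
    simp only [if_pos rfl, if_true]
    linarith
  have hP0 : ∀ i j, 0 ≤ P i j := by
    intro i j
    by_cases hij : i = j
    · subst hij; exact (hPdiagpos i).le
    · rw [hPapp, if_neg hij]
      have := hQoff i j hij
      positivity
  have hPedge : ∀ e : Fin m, 0 < P (dst e) (src e) := by
    intro e
    have hne : dst e ≠ src e := fun hh => (hloop e) hh.symm
    rw [hPapp, if_neg hne]
    have := hQedge e
    nlinarith
  -- strong connectivity gives positive powers
  have hpos : ∀ i j : Fin n, ∃ L : ℕ, 0 < (P ^ L) i j := by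
    intro i j
    have h := hconn j i
    induction h with
    | refl => exact ⟨0, by simp [Matrix.one_apply]⟩
    | @tail b c hab hbc ih =>
      obtain ⟨L, hL⟩ := ih
      obtain ⟨e, he1, he2⟩ := hbc
      refine ⟨L + 1, ?_⟩
      rw [pow_succ', Matrix.mul_apply]
      have hle : P c b * (P ^ L) b j ≤ ∑ l, P c l * (P ^ L) l j :=
        Finset.single_le_sum (f := fun l => P c l * (P ^ L) l j)
          (fun l _ => mul_nonneg (hP0 c l) (pow_entry_nonneg hP0 L l j)) (Finset.mem_univ b)
      refine lt_of_lt_of_le (mul_pos ?_ hL) hle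
      rw [← he1, ← he2]
      exact hPedge e
  -- uniform N
  set Lf : Fin n × Fin n → ℕ := fun p => (hpos p.1 p.2).choose with hLf
  set N : ℕ := (Finset.univ.sup Lf) + 1 with hN
  have hNpos : 0 < N := Nat.succ_pos _
  have hPN : ∀ i j, 0 < (P ^ N) i j := by
    intro i j
    refine pow_pos_mono hP0 hPdiagpos ?_ (hpos i j).choose_spec
    calc Lf (i, j) ≤ Finset.univ.sup Lf := Finset.le_sup (Finset.mem_univ (i,j))
      _ ≤ N := Nat.le_succ _
  set δ : ℝ := Finset.univ.inf' Finset.univ_nonempty (fun p : Fin n × Fin n => (P ^ N) p.1 p.2)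
    with hδdef
  have hδpos : 0 < δ := by
    obtain ⟨p, -, hp⟩ := Finset.exists_mem_eq_inf' (Finset.univ_nonempty)
      (fun p : Fin n × Fin n => (P ^ N) p.1 p.2)
    rw [hδdef, hp]
    exact hPN p.1 p.2
  set ε : ℝ := min δ (1/4) with hεdef
  have hε0 : 0 < ε := lt_min hδpos (by norm_num)
  have hε1 : ε ≤ 1/4 := min_le_right _ _
  have hεP : ∀ i j, ε ≤ (P ^ N) i j := fun i j =>
    le_trans (min_le_left _ _) (Finset.inf'_le _ (Finset.mem_univ (i,j)))
  -- relate k • Q to a • (P - 1)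
  set a : ℝ := k * ((m:ℝ)+1) with ha_def
  have ha : 0 < a := by positivity
  have hAa : k • Q = a • (P - 1) := by
    rw [hPdef]
    have : (1 : Matrix (Fin n) (Fin n) ℝ) + c0 • Q - 1 = c0 • Q := by abel
    rw [this, smul_smul]
    have : a * c0 = k := by
      rw [ha_def, hc0]
      field_simp
    rw [this]
  -- the frequency vector
  set ω : ℝ → Fin n → ℝ := fun t => ωu + k • Q.mulVec (θt t) with hω
  set cinf : ℝ := ∑ i, z i * ωu i with hcinf
  have hωderiv : ∀ t : ℝ, 0 ≤ t → HasDerivAt ω ((k • Q).mulVec (ω t)) t := by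
    intro t ht
    have h1 := hθt t ht
    have h2 := ((vmCLM (k • Q)).hasFDerivAt.comp_hasDerivAt t h1).const_add ωu
    have h3 : (vmCLM (k • Q)) (k • Q.mulVec (θt t) + ωu) = (k • Q).mulVec (ω t) := by
      rw [vmCLM_apply, hω]
      congr 1
      rw [add_comm]
    rw [h3] at h2
    refine h2.congr_of_eventuallyEq (Filter.Eventually.of_forall fun u => ?_)
    rw [hω]
    show ωu + k • Q.mulVec (θt u) = ωu + (vmCLM (k • Q)) (θt u)
    rw [vmCLM_apply, Matrix.smul_mulVec]
  have hsol : ∀ t : ℝ, 0 ≤ t → ω t = (exp (t • (k • Q))).mulVec (ω 0) :=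
    ode_eq_exp hωderiv
  obtain ⟨C, lam, hC, hlam, hdecay⟩ :=
    exp_pair_decay P hP0 hProw hNpos hε0 hε1 hεP ha (ω 0)
  rw [← hAa] at hdecay
  -- conservation of the z-average
  have hcons : ∀ t : ℝ, z ⬝ᵥ ω t = cinf := by
    intro t
    rw [hω]
    simp only [dotProduct_add, dotProduct_smul]
    rw [dotProduct_mulVec, hzQ]
    simp [hcinf, dotProduct, mul_comm]
  -- pointwise bound
  have hbnd : ∀ t : ℝ, 0 ≤ t → ∀ i, |ω t i - cinf| ≤ C * Real.exp (-(lam * t)) := by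
    intro t ht i
    have h1 : ω t i - cinf = ∑ j, z j * (ω t i - ω t j) := by
      rw [← hcons t]
      have : ∑ j, z j * (ω t i - ω t j) = (∑ j, z j) * ω t i - ∑ j, z j * ω t j := by
        rw [Finset.sum_mul]
        rw [← Finset.sum_sub_distrib]
        refine Finset.sum_congr rfl fun j _ => ?_
        ring
      rw [this, hz1, one_mul]
      rfl
    rw [h1]
    calc |∑ j, z j * (ω t i - ω t j)| ≤ ∑ j, |z j * (ω t i - ω t j)| :=
          Finset.abs_sum_le_sum_abs _ _
      _ ≤ ∑ j, z j * (C * Real.exp (-(lam * t))) := by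
          refine Finset.sum_le_sum fun j _ => ?_
          rw [abs_mul, abs_of_pos (hz j)]
          refine mul_le_mul_of_nonneg_left ?_ (hz j).le
          have h2 := hdecay t ht i j
          rw [← hsol t ht] at h2
          exact h2
      _ = C * Real.exp (-(lam * t)) := by
          rw [← Finset.sum_mul, hz1, one_mul]
  -- part 1: convergence of frequencies
  have htend0 : Tendsto (fun t : ℝ => C * Real.exp (-(lam * t))) atTop (nhds 0) := by
    have h1 : Tendsto (fun t : ℝ => lam * t) atTop atTop :=
      Tendsto.const_mul_atTop hlam tendsto_id
    have h2 : Tendsto (fun t : ℝ => -(lam * t)) atTop atBot := tendsto_neg_atBot_iff.mpr h1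
    have h3 := Real.tendsto_exp_atBot.comp h2
    have h4 := h3.const_mul C
    simpa using h4
  have hpart1 : Tendsto ω atTop (nhds (fun _ : Fin n => cinf)) := by
    rw [tendsto_iff_norm_sub_tendsto_zero]
    refine squeeze_zero' (Filter.Eventually.of_forall fun t => norm_nonneg _) ?_ htend0
    filter_upwards [Filter.eventually_ge_atTop (0:ℝ)] with t ht
    refine (pi_norm_le_iff_of_nonneg (mul_nonneg hC (Real.exp_nonneg _))).mpr fun i => ?_
    simpa [Real.norm_eq_abs] using hbnd t ht i
  -- part 2
  have heq2 : (fun t : ℝ => k • Q.mulVec (θt t)) = fun t => ω t - ωu := by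
    funext t
    rw [hω]
    exact (add_sub_cancel_left ωu _).symm
  have hlim2 : (fun _ : Fin n => cinf) - ωu = (vecMulVec (fun _ => (1 : ℝ)) z - 1).mulVec ωu := by
    funext i
    rw [Matrix.sub_mulVec, Matrix.one_mulVec]
    simp [Matrix.vecMulVec_apply, Matrix.mulVec, dotProduct, hcinf]
  have hpart2 : Tendsto (fun t : ℝ => k • Q.mulVec (θt t)) atTop
      (nhds ((vecMulVec (fun _ => (1 : ℝ)) z - 1).mulVec ωu)) := by
    rw [heq2, ← hlim2]
    exact hpart1.sub tendsto_const_nhds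
  -- part 3
  set β : ℝ → Fin m → ℝ := fun t => Bᵀ.mulVec (θt t) with hβ
  set g : ℝ → Fin m → ℝ := fun t => Bᵀ.mulVec (ω t) with hg
  have hBabs : ∀ i e, |B i e| ≤ 1 := by
    intro i e
    rw [hB, hS, hD]
    by_cases h1 : src e = i <;> by_cases h2 : dst e = i
    · exact absurd (h1.trans h2.symm) (hloop e)
    all_goals simp [Matrix.sub_apply, h1, h2]
  have hBcol : ∀ e, ∑ i, B i e = 0 := by
    intro e
    rw [hB, hS, hD]
    simp [Matrix.sub_apply, Finset.sum_sub_distrib, Finset.sum_ite_eq]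
  have hgbound : ∀ t : ℝ, 0 ≤ t → ‖g t‖ ≤ ((n : ℝ) * C) * Real.exp (-(lam * t)) := by
    intro t ht
    have hnn : 0 ≤ ((n : ℝ) * C) * Real.exp (-(lam * t)) := by
      have hn0 : (0:ℝ) ≤ (n : ℝ) := by positivity
      exact mul_nonneg (mul_nonneg hn0 hC) (Real.exp_nonneg _)
    refine (pi_norm_le_iff_of_nonneg hnn).mpr fun e => ?_
    have he : ∑ i, B i e * (ω t i - cinf) = g t e := by
      have h1 : ∑ i, B i e * (ω t i - cinf) = ∑ i, B i e * ω t i - (∑ i, B i e) * cinf := by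
        rw [Finset.sum_mul, ← Finset.sum_sub_distrib]
        refine Finset.sum_congr rfl fun i _ => ?_
        ring
      rw [h1, hBcol e, zero_mul, sub_zero, hg]
      simp [Matrix.mulVec, dotProduct, Matrix.transpose_apply]
    rw [Real.norm_eq_abs, ← he]
    calc |∑ i, B i e * (ω t i - cinf)| ≤ ∑ i, |B i e * (ω t i - cinf)| :=
          Finset.abs_sum_le_sum_abs _ _
      _ ≤ ∑ _i : Fin n, 1 * (C * Real.exp (-(lam * t))) := by
          refine Finset.sum_le_sum fun i _ => ?_
          rw [abs_mul]
          exact mul_le_mul (hBabs i e) (hbnd t ht i) (abs_nonneg _) zero_le_one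
      _ = ((n : ℝ) * C) * Real.exp (-(lam * t)) := by
          rw [Finset.sum_const, Finset.card_univ, Fintype.card_fin, nsmul_eq_mul]
          ring
  have hωcont : ContinuousOn ω (Set.Ici 0) :=
    fun t ht => ((hωderiv t ht).continuousAt).continuousWithinAt
  have hgcont : ContinuousOn g (Set.Ici 0) := by
    have hgeq : g = fun t => vmCLM Bᵀ (ω t) := by funext t; rw [hg, vmCLM_apply]
    rw [hgeq]
    exact (vmCLM Bᵀ).continuous.comp_continuousOn hωcont
  have hβder : ∀ x : ℝ, 0 ≤ x → HasDerivAt β (g x) x := by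
    intro x hx
    have h1 := hθt x hx
    have h2 := (vmCLM Bᵀ).hasFDerivAt.comp_hasDerivAt x h1
    have h3 : (vmCLM Bᵀ) (k • Q.mulVec (θt x) + ωu) = g x := by
      rw [vmCLM_apply, hg, hω]
      congr 1
      rw [add_comm]
    rw [h3] at h2
    refine h2.congr_of_eventuallyEq (Filter.Eventually.of_forall fun u => ?_)
    rw [hβ]
    rfl
  have hFTC : ∀ t : ℝ, 0 ≤ t → β t = β 0 + ∫ s in (0:ℝ)..t, g s := by
    intro t ht
    have hint : IntervalIntegrable g volume 0 t := by
      apply ContinuousOn.intervalIntegrable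
      refine hgcont.mono fun x hx => ?_
      rw [Set.uIcc_of_le ht] at hx
      exact hx.1
    have h1 := intervalIntegral.integral_eq_sub_of_hasDerivAt (f := β) (f' := g)
      (fun x hx => hβder x (by rw [Set.uIcc_of_le ht] at hx; exact hx.1)) hint
    rw [h1]
    abel
  have hIoi : IntegrableOn g (Set.Ioi (0:ℝ)) volume := by
    have hig : IntegrableOn (fun t : ℝ => ((n : ℝ) * C) * Real.exp (-(lam * t)))
        (Set.Ioi (0:ℝ)) volume := by
      have h1 := (exp_neg_integrableOn_Ioi 0 hlam).const_mul ((n : ℝ) * C)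
      simpa [neg_mul, IntegrableOn] using h1
    refine Integrable.mono' hig ?_ ?_
    · exact (hgcont.mono fun x hx => le_of_lt hx).aestronglyMeasurable measurableSet_Ioi
    · refine (ae_restrict_iff' measurableSet_Ioi).mpr (Filter.Eventually.of_forall fun t ht => ?_)
      exact hgbound t (le_of_lt ht)
  have htendI := MeasureTheory.intervalIntegral_tendsto_integral_Ioi 0 hIoi tendsto_id
  set βss : Fin m → ℝ := β 0 + ∫ s in Set.Ioi (0:ℝ), g s with hβss
  have hβtend : Tendsto β atTop (nhds βss) := by
    have h1 : Tendsto (fun t : ℝ => β 0 + ∫ s in (0:ℝ)..t, g s) atTop (nhds βss) := by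
      rw [hβss]
      exact tendsto_const_nhds.add htendI
    refine h1.congr' ?_
    filter_upwards [Filter.eventually_ge_atTop (0:ℝ)] with t ht
    exact (hFTC t ht).symm
  have hDb : (fun t : ℝ => k • D.mulVec (β t)) = fun t => k • Q.mulVec (θt t) := by
    funext t
    rw [hβ]
    show k • D.mulVec (Bᵀ.mulVec (θt t)) = k • Q.mulVec (θt t)
    rw [Matrix.mulVec_mulVec, ← hQ]
  have hid : k • D.mulVec βss = (vecMulVec (fun _ => (1 : ℝ)) z - 1).mulVec ωu := by
    have hT1 : Tendsto (fun t : ℝ => k • D.mulVec (β t)) atTop (nhds (k • D.mulVec βss)) := by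
      have h1 := ((vmCLM D).continuous.tendsto βss).comp hβtend
      have h2 := h1.const_smul k
      refine h2.congr fun t => ?_
      simp
    have hT2 : Tendsto (fun t : ℝ => k • D.mulVec (β t)) atTop
        (nhds ((vecMulVec (fun _ => (1 : ℝ)) z - 1).mulVec ωu)) := by
      rw [hDb]
      exact hpart2
    have huniq := tendsto_nhds_unique hT1 hT2
    simpa using huniq
  refine ⟨?_, hpart2, βss, hβtend, hid⟩
  rw [hcinf] at hpart1
  exact hpart1
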